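/- arXiv:2002.02124 — 7 statements merged into one kernel-verified Lean document; each statement's English description precedes it below -/
import Mathlib

section
/- Let $k$ be a field, $R$ a $k$-algebra and $A$ an $R$-algebra such that (1) $A$ is a unique factorization domain, (2) $R$ is a retract of $A$ (i.e., there is a retraction $\Phi : A \to R$), and (3) $A$ is an $\mathbb{A}^1$-form over $R$ with respect to $k$. Then $A \cong R[X]$ as $R$-algebras. -/
/-!
Write `S = R ⊗[k] k'`, which is faithfully flat over `R`, and `E : S ⊗[R] A ≃ S[X]`.
The base change of the retraction `Φ` has kernel `(ker Φ)·(S ⊗ A)`, and `E` carries it to the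
kernel `(X - s₀)` of an evaluation. In the UFD `A` the prime `ker Φ` contains a prime `p`; since
`A/(p)` is a domain and `S` is flat, `1 ⊗ x` stays a nonzerodivisor modulo `1 ⊗ p` for `x ∉ (p)`,
which forces `ker Φ = (p)` and hence `E (1 ⊗ p) = (X - s₀) · u` with `u` a unit.
Then `X ↦ p` is injective on `R[X]` because `Φ p = 0` and `p` is a nonzerodivisor, and it is
surjective because it becomes so after the faithfully flat base change to `S`: there it is the
substitution `X ↦ (X - s₀) · u`, which is onto by Nakayama's lemma for the nilpotent ideal
generated by the higher coefficients of `u`.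
-/

open TensorProduct

/-- A witness that the `R`-algebra `A` is an `𝔸¹`-form over `R` with respect to the base
field `k`: an algebraic field extension `k'` of `k` together with an isomorphism of
`(R ⊗[k] k')`-algebras between the base change of `A` and the polynomial ring in one
variable over `R ⊗[k] k'`.  (The base change `A ⊗[k] k'` is canonically identified with
`(R ⊗[k] k') ⊗[R] A` as an `(R ⊗[k] k')`-algebra.) -/
structure A1FormWitness (k R A : Type*) [Field k] [CommRing R] [Algebra k R]
    [CommRing A] [Algebra R A] [Algebra k A] [IsScalarTower k R A] where
  k' : Type*
  [fieldk' : Field k']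
  [algk' : Algebra k k']
  isAlgebraic : Algebra.IsAlgebraic k k'
  equiv : ((R ⊗[k] k') ⊗[R] A) ≃ₐ[R ⊗[k] k'] Polynomial (R ⊗[k] k')

open Polynomial Ideal Algebra.TensorProduct

theorem Submodule.le_of_le_sup_smul_of_isNilpotent {R M : Type*} [CommRing R] [AddCommGroup M]
    [Module R M] {I : Ideal R} (hI : IsNilpotent I) {N N' : Submodule R M}
    (h : N' ≤ N ⊔ I • N') : N' ≤ N := by
  have key : ∀ n : ℕ, N' ≤ N ⊔ I ^ n • N' := by
    intro n
    induction n with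
    | zero => simp
    | succ n ih =>
      calc N' ≤ N ⊔ I ^ n • N' := ih
        _ ≤ N ⊔ I ^ n • (N ⊔ I • N') := sup_le_sup_left (smul_mono_right _ h) _
        _ ≤ N ⊔ I ^ (n + 1) • N' := by
          rw [Submodule.smul_sup, ← Submodule.mul_smul, ← pow_succ, ← sup_assoc]
          exact sup_le_sup_right (sup_le le_rfl Submodule.smul_le_right) _
  obtain ⟨n, hn⟩ := hI
  simpa [hn] using key n

theorem Ideal.eq_span_singleton_of_map_eq_span_singleton {A T F : Type*} [CommRing A]
    [CommRing T] [FunLike F A T] [RingHomClass F A T] (ι : F) {I : Ideal A} {p : A} (hp : p ∈ I)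
    {τ : T} (hI : I.map ι = span {τ}) (hτ : ¬IsUnit τ) (hreg : IsLeftRegular (ι p))
    (hmod : ∀ x ∉ span {p}, ∀ w, ι x * w ∈ span {ι p} → w ∈ span {ι p}) :
    I = span {p} := by
  refine le_antisymm (fun x hx => ?_) (span_singleton_le_iff_mem _ |>.mpr hp)
  by_contra hxp
  obtain ⟨g, hg⟩ : τ ∣ ι x := mem_span_singleton.mp (hI ▸ mem_map_of_mem ι hx)
  obtain ⟨h, hh⟩ : τ ∣ ι p := mem_span_singleton.mp (hI ▸ mem_map_of_mem ι hp)
  obtain ⟨d, rfl⟩ : ι p ∣ h := mem_span_singleton.mp <|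
    hmod x hxp h (mem_span_singleton.mpr ⟨g, by rw [hg, hh]; ring⟩)
  refine hτ (IsUnit.of_mul_eq_one (a := τ) d (hreg ?_))
  linear_combination -hh

theorem Ideal.exists_isUnit_mul_eq_of_span_singleton_eq {T : Type*} [CommRing T] {a b : T}
    (hb : IsLeftRegular b) (h : span {a} = span {b}) : ∃ u, IsUnit u ∧ a = b * u := by
  obtain ⟨u, hu⟩ : b ∣ a := mem_span_singleton.mp (h ▸ mem_span_singleton_self a)
  obtain ⟨v, hv⟩ : a ∣ b := mem_span_singleton.mp (h ▸ mem_span_singleton_self b)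
  refine ⟨u, IsUnit.of_mul_eq_one (a := u) v (hb ?_), hu⟩
  linear_combination -hv - v * hu

theorem Polynomial.aeval_injective_of_retraction {R A : Type*} [CommRing R] [CommRing A]
    [Algebra R A] (Φ : A →ₐ[R] R) {a : A} (ha : IsLeftRegular a) (hΦa : Φ a = 0) :
    Function.Injective (aeval a : R[X] →ₐ[R] A) := by
  rw [injective_iff_map_eq_zero]
  intro f
  induction f using Polynomial.recOnHorner with
  | M0 => exact fun _ => rfl
  | MC p c hp hc _ =>
    intro h
    refine absurd ?_ hc
    have := congrArg Φ h
    rwa [map_add, map_add, ← aeval_algHom_apply, hΦa, ← coeff_zero_eq_aeval_zero, hp, aeval_C,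
      Φ.commutes, zero_add, map_zero] at this
  | MX p _ ih =>
    intro h
    rw [map_mul, aeval_X, mul_comm] at h
    rw [ih (ha (h.trans (mul_zero a).symm)), zero_mul]

theorem Polynomial.aeval_mul_X_surjective {S : Type*} [CommRing S] {w : S[X]} (hw : IsUnit w) :
    Function.Surjective (aeval (w * X) : S[X] →ₐ[S] S[X]) := by
  obtain ⟨a, ha⟩ : IsUnit (w.coeff 0) := hw.map constantCoeff
  set ν := w - C (w.coeff 0)
  set 𝔫 : Ideal S := span ν.coeffs
  have hν : ν ∈ 𝔫.map C := by
    rw [mem_map_C_iff]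
    intro n
    by_cases h : ν.coeff n = 0
    · simp [h]
    · exact subset_span (coeff_mem_coeffs h)
  have h𝔫 : IsNilpotent 𝔫 := by
    rw [Ideal.FG.isNilpotent_iff_le_nilradical (Submodule.fg_span (Finset.finite_toSet _)),
      Ideal.span_le]
    rintro _ hc
    obtain ⟨n, -, rfl⟩ := mem_coeffs_iff.mp hc
    rcases eq_or_ne n 0 with rfl | hn
    · simp [ν]
    · simpa [ν, coeff_C, hn, mem_nilradical] using
        (isUnit_iff_coeff_isUnit_isNilpotent.mp hw).2 n hn
  -- `ψ` lies in the range of `aeval (w * X)` and is the identity modulo the nilpotent `𝔫`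
  let ψ := (aeval (w * X)).comp (aeval (C (↑a⁻¹ : S) * X))
  have hψ : ∀ f, ψ f - f ∈ 𝔫.map C := by
    suffices (Ideal.Quotient.mkₐ S (𝔫.map C)).comp ψ = Ideal.Quotient.mkₐ S (𝔫.map C) from
      fun f => Ideal.Quotient.eq.mp (DFunLike.congr_fun this f)
    refine algHom_ext ?_
    rw [AlgHom.comp_apply, Ideal.Quotient.mkₐ_eq_mk, Ideal.Quotient.eq]
    have : ψ X - X = C (↑a⁻¹ : S) * ν * X := by
      have haC : C (↑a⁻¹ : S) * C (w.coeff 0) = 1 := by rw [← ha, ← C_mul, Units.inv_mul, C_1]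
      simp only [ψ, AlgHom.comp_apply, aeval_X, map_mul, aeval_C, algebraMap_eq, ν]
      linear_combination X * haC
    rw [this]
    exact Ideal.mul_mem_right _ _ (Ideal.mul_mem_left _ _ hν)
  have : (⊤ : Submodule S S[X]) ≤ LinearMap.range (aeval (w * X)).toLinearMap := by
    refine Submodule.le_of_le_sup_smul_of_isNilpotent h𝔫 fun f _ => ?_
    rw [Ideal.smul_top_eq_map]
    refine Submodule.mem_sup.mpr ⟨ψ f, ⟨aeval (C (↑a⁻¹ : S) * X) f, rfl⟩, f - ψ f, ?_, by ring⟩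
    simpa using (𝔫.map C).neg_mem (hψ f)
  exact fun f => this Submodule.mem_top

theorem Polynomial.aeval_X_sub_C_mul_surjective {S : Type*} [CommRing S] (c : S) {u : S[X]}
    (hu : IsUnit u) : Function.Surjective (aeval ((X - C c) * u) : S[X] →ₐ[S] S[X]) := by
  have htaylor : taylorEquiv c ((X - C c) * u) = taylorEquiv c u * X := by
    have hX : taylorEquiv c X = X + C c := taylor_X c
    have hC : taylorEquiv c (C c) = C c := taylor_C c c
    rw [map_mul, map_sub, hX, hC]
    ring
  intro f
  obtain ⟨g, hg⟩ := aeval_mul_X_surjective (hu.map (taylorEquiv c)) (taylorEquiv c f)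
  refine ⟨g, (taylorEquiv c).injective ?_⟩
  rw [← hg, ← htaylor, aeval_algHom_apply]

section Flat

variable {R S A : Type*} [CommRing R] [CommRing S] [Algebra R S] [CommRing A] [Algebra R A]

theorem Algebra.TensorProduct.includeRight_mul_eq_lTensor_mulLeft (a : A) (w : S ⊗[R] A) :
    includeRight a * w = LinearMap.lTensor S (LinearMap.mulLeft R a) w := by
  induction w using TensorProduct.induction_on with
  | zero => simp
  | tmul s b => simp
  | add w₁ w₂ h₁ h₂ => rw [mul_add, map_add, h₁, h₂]

variable [Module.Flat R S]

theorem Algebra.TensorProduct.isLeftRegular_includeRight {a : A} (ha : IsLeftRegular a) :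
    IsLeftRegular (includeRight a : S ⊗[R] A) := by
  have : (includeRight a * ·) = LinearMap.lTensor S (LinearMap.mulLeft R a) :=
    funext (includeRight_mul_eq_lTensor_mulLeft a)
  rw [IsLeftRegular, this]
  exact Module.Flat.lTensor_preserves_injective_linearMap _ ha

theorem Algebra.TensorProduct.mem_map_includeRight_of_mul_mem {J : Ideal A} {x : A}
    (hx : IsLeftRegular (Ideal.Quotient.mk J x)) {w : S ⊗[R] A}
    (hw : includeRight x * w ∈ J.map (includeRight : A →ₐ[R] S ⊗[R] A)) :
    w ∈ J.map (includeRight : A →ₐ[R] S ⊗[R] A) := by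
  let q := map (AlgHom.id R S) (Ideal.Quotient.mkₐ R J)
  have hker : RingHom.ker q = J.map (includeRight : A →ₐ[R] S ⊗[R] A) := by
    rw [lTensor_ker _ (Ideal.Quotient.mkₐ_surjective R J)]
    congr 1
    exact Ideal.Quotient.mkₐ_ker R J
  have hqx : q (includeRight x) = includeRight (Ideal.Quotient.mk J x) := by simp [q]
  rw [← hker, RingHom.mem_ker] at hw ⊢
  rw [map_mul, hqx] at hw
  exact isLeftRegular_includeRight hx (hw.trans (mul_zero _).symm)

end Flat

theorem exists_map_ker_eq_span_X_sub_C {R S A : Type*} [CommRing R] [CommRing S] [Algebra R S]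
    [CommRing A] [Algebra R A] (Φ : A →ₐ[R] R) (E : S ⊗[R] A ≃ₐ[S] S[X]) :
    ∃ s₀ : S, (RingHom.ker Φ).map (includeRight : A →ₐ[R] S ⊗[R] A) =
      span {E.symm (X - C s₀)} := by
  let ΦS : S ⊗[R] A →ₐ[S] S :=
    (Algebra.TensorProduct.rid R S S).toAlgHom.comp (map (AlgHom.id S S) Φ)
  have hker : RingHom.ker ΦS = (RingHom.ker Φ).map (includeRight : A →ₐ[R] S ⊗[R] A) := by
    rw [← lTensor_ker Φ fun r => ⟨algebraMap R A r, Φ.commutes r⟩]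
    ext w
    simp only [RingHom.mem_ker, AlgHom.coe_comp, AlgEquiv.coe_toAlgHom, Function.comp_apply,
      EmbeddingLike.map_eq_zero_iff, ΦS]
    exact Iff.rfl
  set s₀ := ΦS (E.symm X)
  have hev : ΦS = (aeval s₀).comp (E : S ⊗[R] A →ₐ[S] S[X]) := by
    have : ΦS.comp (E.symm : S[X] →ₐ[S] S ⊗[R] A) = aeval s₀ := algHom_ext (by simp [s₀])
    exact AlgHom.ext fun w => by simpa using DFunLike.congr_fun this (E w)
  refine ⟨s₀, ?_⟩
  rw [← hker, hev]
  ext w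
  rw [RingHom.mem_ker, mem_span_singleton, ← map_dvd_iff E, AlgEquiv.apply_symm_apply,
    dvd_iff_isRoot]
  rfl

theorem exists_includeRight_eq_X_sub_C_mul_unit {R S A : Type*} [CommRing R] [CommRing S]
    [Nontrivial S] [Algebra R S] [Module.Flat R S] [CommRing A] [IsDomain A]
    [UniqueFactorizationMonoid A] [Algebra R A] (Φ : A →ₐ[R] R) (E : S ⊗[R] A ≃ₐ[S] S[X]) :
    ∃ p ∈ RingHom.ker Φ, p ≠ 0 ∧
      ∃ (s₀ : S) (u : S[X]), IsUnit u ∧ E (includeRight p) = (X - C s₀) * u := by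
  obtain ⟨s₀, hker⟩ := exists_map_ker_eq_span_X_sub_C Φ E
  set τ := E.symm (X - C s₀)
  have hτ_reg : IsLeftRegular τ := fun a b hab =>
    E.injective <| (monic_X_sub_C s₀).isRegular.left <| by simpa [τ] using congrArg E hab
  have hτ_unit : ¬IsUnit τ := fun h => not_isUnit_X_sub_C s₀ (by simpa [τ] using h.map E)
  have hI : RingHom.ker Φ ≠ ⊥ := fun h => by
    rw [h, Ideal.map_bot, eq_comm, span_singleton_eq_bot] at hker
    exact X_sub_C_ne_zero s₀ ((map_eq_zero_iff E.symm E.symm.injective).mp hker)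
  have : IsDomain R := (Function.LeftInverse.injective (g := Φ) Φ.commutes).isDomain _
  obtain ⟨p, hpI, hp⟩ := (RingHom.ker_isPrime Φ).exists_mem_prime_of_ne_bot hI
  have := (span_singleton_prime hp.ne_zero).mpr hp
  have hmap : (span {p}).map (includeRight : A →ₐ[R] S ⊗[R] A) = span {includeRight p} := by
    rw [map_span, Set.image_singleton]
  have hIp : RingHom.ker Φ = span {p} := by
    refine eq_span_singleton_of_map_eq_span_singleton _ hpI hker hτ_unit
      (isLeftRegular_includeRight (IsRegular.of_ne_zero hp.ne_zero).left) fun x hx w hw => ?_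
    rw [← hmap] at hw ⊢
    refine mem_map_includeRight_of_mul_mem (IsRegular.of_ne_zero ?_).left hw
    rwa [Ne, Ideal.Quotient.eq_zero_iff_mem]
  obtain ⟨u, hu, hpu⟩ := exists_isUnit_mul_eq_of_span_singleton_eq hτ_reg
    (by rw [← hmap, ← hIp, hker])
  exact ⟨p, hpI, hp.ne_zero, s₀, E u, hu.map E, by rw [hpu, map_mul]; simp [τ]⟩

theorem Polynomial.aeval_surjective_of_aeval_includeRight_surjective {R S A : Type*} [CommRing R]
    [CommRing S] [Algebra R S] [Module.FaithfullyFlat R S] [CommRing A] [Algebra R A] {a : A}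
    (h : Function.Surjective (aeval (includeRight a) : S[X] →ₐ[S] S ⊗[R] A)) :
    Function.Surjective (aeval a : R[X] →ₐ[R] A) := by
  refine (Module.FaithfullyFlat.lTensor_surjective_iff_surjective R S
    (aeval a : R[X] →ₐ[R] A).toLinearMap).mp ?_
  have : (aeval (includeRight a) : S[X] →ₐ[S] S ⊗[R] A) =
      (Algebra.TensorProduct.map (AlgHom.id S S) (aeval a)).comp (polyEquivTensor' R S).toAlgHom :=
    algHom_ext (by simp)
  rw [this] at h
  exact Function.Surjective.of_comp (g := polyEquivTensor' R S) h

theorem nonempty_algEquiv_polynomial_of_baseChange {R S A : Type*} [CommRing R] [CommRing S]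
    [Algebra R S] [Module.FaithfullyFlat R S] [CommRing A] [IsDomain A]
    [UniqueFactorizationMonoid A] [Algebra R A] (Φ : A →ₐ[R] R) (E : S ⊗[R] A ≃ₐ[S] S[X]) :
    Nonempty (A ≃ₐ[R] R[X]) := by
  have : Nontrivial S := (algebraMap S (S ⊗[R] A)).domain_nontrivial
  obtain ⟨p, hpI, hp, s₀, u, hu, hpu⟩ := exists_includeRight_eq_X_sub_C_mul_unit Φ E
  have hinj := aeval_injective_of_retraction Φ (IsRegular.of_ne_zero hp).left hpI
  have hsurj : Function.Surjective (aeval p : R[X] →ₐ[R] A) := by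
    refine aeval_surjective_of_aeval_includeRight_surjective (S := S) fun w => ?_
    obtain ⟨f, hf⟩ := aeval_X_sub_C_mul_surjective s₀ hu (E w)
    refine ⟨f, E.injective ?_⟩
    rw [← aeval_algHom_apply, hpu, hf]
  exact ⟨(AlgEquiv.ofBijective (aeval p) ⟨hinj, hsurj⟩).symm⟩

/-- **Corollary 4.** Let `k` be a field, `R` a `k`-algebra and `A` an `R`-algebra such that
(1) `A` is a UFD, (2) `R` is a retract of `A`, and (3) `A` is an `𝔸¹`-form over `R`
(with respect to `k`).  Then `A ≅ R[X]` as `R`-algebras. -/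
theorem factorial_A1_form_with_retraction_trivial
    (k R A : Type*) [Field k] [CommRing R] [Algebra k R]
    [CommRing A] [Algebra R A] [Algebra k A] [IsScalarTower k R A]
    [IsDomain A] [UniqueFactorizationMonoid A]
    (Φ : A →ₐ[R] R)
    (h : Nonempty (A1FormWitness k R A)) :
    Nonempty (A ≃ₐ[R] Polynomial R) := by
  obtain ⟨W⟩ := h
  let := W.fieldk'
  let := W.algk'
  exact nonempty_algEquiv_polynomial_of_baseChange Φ W.equiv
end

section
/- Let $k$ be a field and $A$ a $k$-algebra which is an $\mathbb{A}^1$-form over $k$ such that (1) $A$ is a unique factorization domain, and (2) $A$ has a $k$-rational point, i.e., there exists a $k$-algebra homomorphism $A \to k$. Then $A \cong k[X]$ as $k$-algebras. -/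
/-!
Trivialise `A` over `k'` by `e : k' ⊗[k] A ≃ₐ[k'] k'[X]`. The kernel of the rational point `Φ` is
a nonzero prime (otherwise `A ≅ k`), so in the UFD `A` it contains a prime `p`. Since
`k' ⊗[k] A/(p) ≅ k'[X]/(e (1 ⊗ p))`, the domain `A/(p)` has `k`-dimension `deg e (1 ⊗ p) < ∞`;
so it is a field, which `Φ` identifies with `k`, and `e (1 ⊗ p)` has degree one. Then
`k[X] → A`, `X ↦ p` becomes an isomorphism after the faithfully flat base change to `k'`, hence
is one.
-/

open TensorProduct

/-- A witness that the `k`-algebra `A` is an `𝔸¹`-form over the field `k`: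
an algebraic field extension `k'` of `k` together with an isomorphism of `k'`-algebras
`A ⊗[k] k' ≅ k'[X]`. -/
structure A1FormWitnessOverField (k A : Type*) [Field k] [CommRing A] [Algebra k A] where
  k' : Type*
  [fieldk' : Field k']
  [algk' : Algebra k k']
  isAlgebraic : Algebra.IsAlgebraic k k'
  equiv : (k' ⊗[k] A) ≃ₐ[k'] Polynomial k'

open Polynomial

theorem Module.finrank_eq_one_of_isDomain_of_algHom {k D : Type*} [Field k] [CommRing D]
    [IsDomain D] [Algebra k D] [Module.Finite k D] (φ : D →ₐ[k] k) : Module.finrank k D = 1 := by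
  have : IsArtinianRing D := IsArtinianRing.of_finite k D
  have hinj : Function.Injective φ := by
    refine (injective_iff_map_eq_zero φ).mpr fun x hx => by_contra fun hx0 => ?_
    obtain ⟨y, hy⟩ := (IsArtinianRing.isField_of_isDomain (R := D)).mul_inv_cancel hx0
    simpa [hx] using congrArg φ hy
  have hsurj : Function.Surjective φ := fun c => ⟨algebraMap k D c, φ.commutes c⟩
  rw [(LinearEquiv.ofBijective φ.toLinearMap ⟨hinj, hsurj⟩).finrank_eq, Module.finrank_self]

theorem Polynomial.aeval_bijective_of_natDegree_eq_one {K B : Type*} [Field K] [CommRing B]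
    [Algebra K B] (e : B ≃ₐ[K] K[X]) {b : B} (hb : (e b).natDegree = 1) :
    Function.Bijective (aeval b : K[X] →ₐ[K] B) := by
  have ha : (e b).coeff 1 ≠ 0 := by
    rw [← hb]; exact leadingCoeff_ne_zero.mpr (ne_zero_of_natDegree_gt (hb ▸ one_pos))
  let _ := invertibleOfNonzero ha
  have : aeval b = ((algEquivCMulXAddC ((e b).coeff 1) ((e b).coeff 0)).trans e.symm).toAlgHom := by
    ext
    simp [← eq_X_add_C_of_natDegree_le_one hb.le]
  rw [this]
  exact AlgEquiv.bijective _

theorem Polynomial.aeval_bijective_of_aeval_tmul_bijective {R R' A : Type*} [CommRing R]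
    [CommRing R'] [Algebra R R'] [Module.FaithfullyFlat R R'] [CommRing A] [Algebra R A] (a : A)
    (h : Function.Bijective (aeval (1 ⊗ₜ a : R' ⊗[R] A) : R'[X] →ₐ[R'] R' ⊗[R] A)) :
    Function.Bijective (aeval a : R[X] →ₐ[R] A) := by
  have hcomp : (Algebra.TensorProduct.map (AlgHom.id R' R') (aeval a)).comp
      (polyEquivTensor' R R').toAlgHom = aeval (1 ⊗ₜ a) := by
    ext; simp
  refine (Module.FaithfullyFlat.lTensor_bijective_iff_bijective R R' (aeval a).toLinearMap).mp ?_
  change Function.Bijective (Algebra.TensorProduct.map (AlgHom.id R' R') (aeval a))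
  rw [← hcomp] at h
  simpa using h.comp (polyEquivTensor' R R').symm.bijective

section

variable {k k' A : Type*} [Field k] [Field k'] [Algebra k k'] [CommRing A] [Algebra k A]

theorem ker_ne_bot_of_tensor_algEquiv_polynomial (e : k' ⊗[k] A ≃ₐ[k'] k'[X]) (Φ : A →ₐ[k] k) :
    RingHom.ker Φ ≠ ⊥ := by
  intro hker
  have hinj : Function.Injective Φ := (RingHom.injective_iff_ker_eq_bot _).mpr hker
  have hsurj : Function.Surjective Φ := fun c => ⟨algebraMap k A c, Φ.commutes c⟩
  have : Module.Finite k A :=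
    Module.Finite.equiv (LinearEquiv.ofBijective Φ.toLinearMap ⟨hinj, hsurj⟩).symm
  exact Polynomial.not_finite (Module.Finite.equiv e.toLinearEquiv)

theorem rank_quotient_span_eq_natDegree (e : k' ⊗[k] A ≃ₐ[k'] k'[X]) {p : A}
    (hp : e (1 ⊗ₜ p) ≠ 0) :
    Module.rank k (A ⧸ Ideal.span {p}) = (e (1 ⊗ₜ p)).natDegree := by
  let q : k' ⊗[k] (A ⧸ Ideal.span {p}) ≃ₐ[k'] k'[X] ⧸ Ideal.span {e (1 ⊗ₜ p)} :=
    (Algebra.TensorProduct.tensorQuotientEquiv k' A k' _).trans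
      (Ideal.quotientEquivAlg _ _ e (by simp only [Ideal.map_span, Set.image_singleton]; rfl))
  have : Module.Finite k' (k'[X] ⧸ Ideal.span {e (1 ⊗ₜ p)}) := (AdjoinRoot.powerBasis hp).finite
  have h := q.toLinearEquiv.lift_rank_eq
  rw [Module.rank_baseChange, ← Module.finrank_eq_rank (R := k'),
    finrank_quotient_span_eq_natDegree] at h
  simpa using h

end

/-- **Theorem 2.** Let `k` be a field and `A` an `𝔸¹`-form over `k` such that
(1) `A` is a UFD, and (2) `A` has a `k`-rational point (i.e. a `k`-algebra homomorphism
`A → k`).  Then `A ≅ k[X]`. -/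
theorem factorial_A1_form_over_field_with_rational_point_trivial
    (k A : Type*) [Field k] [CommRing A] [Algebra k A]
    [IsDomain A] [UniqueFactorizationMonoid A]
    (h : Nonempty (A1FormWitnessOverField k A))
    (Φ : A →ₐ[k] k) :
    Nonempty (A ≃ₐ[k] Polynomial k) := by
  obtain ⟨⟨k', -, e⟩⟩ := h
  obtain ⟨p, hpΦ, hp⟩ := (RingHom.ker_isPrime Φ).exists_mem_prime_of_ne_bot
    (ker_ne_bot_of_tensor_algEquiv_polynomial e Φ)
  have hg : e (1 ⊗ₜ p) ≠ 0 := (map_ne_zero_iff e e.injective).mpr <|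
    (map_ne_zero_iff _ (Algebra.TensorProduct.includeRight_injective
      (algebraMap k k').injective)).mpr hp.ne_zero
  have hrank := rank_quotient_span_eq_natDegree e hg
  have : IsDomain (A ⧸ Ideal.span {p}) :=
    (Ideal.Quotient.isDomain_iff_prime _).mpr ((Ideal.span_singleton_prime hp.ne_zero).mpr hp)
  have : Module.Finite k (A ⧸ Ideal.span {p}) :=
    Module.rank_lt_aleph0_iff.mp (hrank ▸ Cardinal.natCast_lt_aleph0)
  have hdeg : (e (1 ⊗ₜ p)).natDegree = 1 := by
    rw [← Module.finrank_eq_of_rank_eq hrank]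
    exact Module.finrank_eq_one_of_isDomain_of_algHom <|
      Ideal.Quotient.liftₐ _ Φ fun _ ha => (Ideal.span_singleton_le_iff_mem _).mpr hpΦ ha
  exact ⟨(AlgEquiv.ofBijective _ (aeval_bijective_of_aeval_tmul_bijective p
    (aeval_bijective_of_natDegree_eq_one e hdeg))).symm⟩
end

section
/- Let $R$ be a commutative ring, let $\lambda$ be a unit of the polynomial ring $R[X]$, and set $g = \lambda X$. Then the $R$-subalgebra of $R[X]$ generated by $g$ is all of $R[X]$, i.e., $R[g] = R[X]$. -/
/-!
Write `λ = C u + X * q` with `u` a unit and `q` nilpotent, and let `N` be the ideal of `R`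
generated by the coefficients of `q`; it is finitely generated by nilpotents, hence nilpotent.
Modulo `N`, `λ * X` becomes `u * X`, which generates `R[X]`, so `R[λ * X] + N • R[X] = R[X]`.
Since `N` acts by `R`-scalars it preserves `R[λ * X]`, and iterating gives
`R[λ * X] + N ^ k • R[X] = R[X]` for every `k`; nilpotency of `N` finishes the proof.
-/

open Polynomial

theorem Submodule.eq_top_of_sup_smul_top_eq_top {R M : Type*} [CommSemiring R] [AddCommMonoid M]
    [Module R M] {I : Ideal R} (hI : IsNilpotent I) {A : Submodule R M}
    (h : A ⊔ I • ⊤ = ⊤) : A = ⊤ := by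
  have hpow : ∀ n : ℕ, A ⊔ (I ^ n) • ⊤ = ⊤ := by
    intro n
    induction n with
    | zero => simp
    | succ n ih =>
      refine eq_top_iff.mpr ?_
      calc ⊤ = A ⊔ (I ^ n) • (A ⊔ I • ⊤) := by rw [h, ih]
        _ = (A ⊔ (I ^ n) • A) ⊔ (I ^ (n + 1)) • ⊤ := by
          rw [smul_sup, ← sup_assoc, pow_succ, Submodule.mul_smul]
        _ ≤ A ⊔ (I ^ (n + 1)) • ⊤ := sup_le_sup_right (sup_le le_rfl smul_le_right) _
  obtain ⟨k, hk⟩ := hI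
  simpa [hk] using hpow k

theorem Subalgebra.eq_top_of_map_mkₐ_eq_top {R S : Type*} [CommRing R] [CommRing S] [Algebra R S]
    {I : Ideal R} (hI : IsNilpotent I) {A : Subalgebra R S}
    (h : A.map (Ideal.Quotient.mkₐ R (I.map (algebraMap R S))) = ⊤) : A = ⊤ := by
  rw [← Algebra.toSubmodule_eq_top]
  refine Submodule.eq_top_of_sup_smul_top_eq_top hI (eq_top_iff.mpr fun s _ => ?_)
  obtain ⟨a, ha, has⟩ := (mem_map ..).mp (h ▸ Algebra.mem_top (x := Ideal.Quotient.mk _ s))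
  rw [Ideal.Quotient.mkₐ_eq_mk, Ideal.Quotient.eq] at has
  rw [Ideal.smul_top_eq_map, ← sub_add_cancel s a, add_comm]
  exact Submodule.add_mem_sup ha (by simpa using neg_mem has)

namespace Polynomial

variable {R : Type*}

theorem isNilpotent_span_coeffs [CommRing R] {q : R[X]} (hq : IsNilpotent q) :
    IsNilpotent (Ideal.span (q.coeffs : Set R)) := by
  refine (Ideal.FG.isNilpotent_iff_le_nilradical ⟨q.coeffs, rfl⟩).mpr (Ideal.span_le.mpr ?_)
  intro c hc
  obtain ⟨n, -, rfl⟩ := mem_coeffs_iff.mp hc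
  exact Polynomial.isNilpotent_iff.mp hq n

theorem mem_map_C_span_coeffs [CommSemiring R] (q : R[X]) :
    q ∈ (Ideal.span (q.coeffs : Set R)).map C := by
  refine Ideal.mem_map_C_iff.mpr fun n => ?_
  by_cases hn : q.coeff n = 0
  · simp [hn]
  · exact Ideal.subset_span (coeff_mem_coeffs hn)

theorem adjoin_C_mul_X_eq_top [CommSemiring R] {u : R} (hu : IsUnit u) :
    Algebra.adjoin R {C u * X} = ⊤ := by
  have hX : C (↑hu.unit⁻¹ : R) * (C u * X) = X := by
    rw [← mul_assoc, ← C_mul, hu.val_inv_mul, C_1, one_mul]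
  have hmem : C (↑hu.unit⁻¹ : R) * (C u * X) ∈ Algebra.adjoin R {C u * X} :=
    Subalgebra.mul_mem _ (Subalgebra.algebraMap_mem _ _) (Algebra.subset_adjoin rfl)
  rw [hX] at hmem
  exact eq_top_iff.mpr (adjoin_X (R := R) ▸ Algebra.adjoin_le (Set.singleton_subset_iff.mpr hmem))

theorem adjoin_C_add_X_mul_mul_X_eq_top [CommRing R] {u : R} {q : R[X]} (hu : IsUnit u)
    (hq : IsNilpotent q) : Algebra.adjoin R {(C u + X * q) * X} = ⊤ := by
  set J := (Ideal.span (q.coeffs : Set R)).map (algebraMap R R[X])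
  have hmk : Ideal.Quotient.mkₐ R J ((C u + X * q) * X) = Ideal.Quotient.mkₐ R J (C u * X) := by
    rw [Ideal.Quotient.mkₐ_eq_mk, Ideal.Quotient.eq, add_mul, add_sub_cancel_left]
    exact J.mul_mem_right _ (J.mul_mem_left _ (mem_map_C_span_coeffs q))
  refine Subalgebra.eq_top_of_map_mkₐ_eq_top (isNilpotent_span_coeffs hq) ?_
  rw [AlgHom.map_adjoin_singleton, hmk, ← AlgHom.map_adjoin_singleton, adjoin_C_mul_X_eq_top hu,
    Algebra.map_top, AlgHom.range_eq_top]
  exact Ideal.Quotient.mkₐ_surjective R J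

end Polynomial

/-- Let `R` be a commutative ring and `λ` a unit of the polynomial ring `R[X]`.
Set `g = λ • X`.  Then the `R`-subalgebra of `R[X]` generated by `g` is all of `R[X]`,
i.e. `R[g] = R[X]`. -/
theorem adjoin_unit_mul_X_eq_top (R : Type*) [CommRing R] (lam : (Polynomial R)ˣ) :
    Algebra.adjoin R {(lam : Polynomial R) * Polynomial.X} = ⊤ := by
  have hlam := lam.isUnit
  rw [← X_mul_divX_add (lam : R[X]), add_comm, isUnit_C_add_X_mul_iff] at hlam
  rw [← X_mul_divX_add (lam : R[X]), add_comm]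
  exact adjoin_C_add_X_mul_mul_X_eq_top hlam.1 hlam.2
end

section
/- Let $R$ be a commutative ring and $A$ an $R$-algebra such that (1) $A$ is an integral domain, (2) there is a retraction $\Phi : A \to R$, and (3) there exists a faithfully flat ring homomorphism $\eta : R \to R'$ such that $A \otimes_R R' \cong R'[X]$ as $R'$-algebras. Then $P = \mathrm{Ker}\,\Phi$ is a prime ideal of $A$ of height one. -/
/-!
After the faithfully flat base change `A ↦ R' ⊗[R] A ≅ R'[X]`, the retraction `Φ` becomes an
`R'`-algebra retraction of `R'[X]`, i.e. evaluation at some `a`. So the extension of `P` is the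
principal ideal generated by the element `t` corresponding to `X - a`, which is nonzero and
satisfies `⋂ (tⁿ) = 0`; in particular `P ≠ 0`. If `Q ⊊ P` is prime, pick `s ∈ P \ Q`. By flatness
`s` stays a nonzerodivisor modulo the extension `J` of `Q`, hence so does its divisor `t`. Then
`J ⊆ (t)` gives `J ⊆ tJ ⊆ t²J ⊆ ⋯`, so `J = 0`, and `Q = 0` since `A → R' ⊗[R] A` is injective.
-/

open TensorProduct

namespace Order

lemma height_eq_one_of_forall_lt_eq_bot {α : Type*} [Preorder α] [OrderBot α] {x : α}
    (hx : ⊥ < x) (h : ∀ y < x, y = ⊥) : height x = 1 := by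
  refine le_antisymm ?_ (by simpa using height_add_one_le hx)
  rw [← Nat.cast_one, height_le_coe_iff]
  intro y hy
  simp [h y hy]

end Order

namespace Polynomial

variable {S : Type*} [CommRing S]

lemma eq_zero_of_forall_X_sub_C_pow_dvd [Nontrivial S] {a : S} {f : S[X]}
    (h : ∀ n, (X - C a) ^ n ∣ f) : f = 0 := by
  by_contra hf
  obtain ⟨g, hg⟩ := h (f.natDegree + 1)
  have hg0 : g ≠ 0 := by
    rintro rfl
    exact hf (by rw [hg, mul_zero])
  have hdeg := congrArg natDegree hg
  rw [((monic_X_sub_C a).pow _).natDegree_mul' hg0, (monic_X_sub_C a).natDegree_pow,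
    natDegree_X_sub_C] at hdeg
  omega

lemma X_sub_C_dvd_iff_algHom_eq_zero (ψ : S[X] →ₐ[S] S) {f : S[X]} :
    X - C (ψ X) ∣ f ↔ ψ f = 0 := by
  rw [dvd_iff_isRoot, IsRoot, ← coe_aeval_eq_eval, aeval_algHom_apply, aeval_X_left_apply]

end Polynomial

lemma Ideal.eq_bot_of_le_span_singleton {B : Type*} [CommRing B] {J : Ideal B} {t : B}
    (hJ : J ≤ Ideal.span {t}) (ht : ∀ z, t * z ∈ J → z ∈ J)
    (hpow : ∀ z, (∀ n, t ^ n ∣ z) → z = 0) : J = ⊥ := by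
  have hdvd : ∀ n, ∀ x ∈ J, ∃ y ∈ J, x = t ^ n * y := by
    intro n
    induction n with
    | zero => exact fun x hx => ⟨x, hx, by rw [pow_zero, one_mul]⟩
    | succ n ih =>
      intro x hx
      obtain ⟨y, hyJ, rfl⟩ := ih x hx
      obtain ⟨y', rfl⟩ := Ideal.mem_span_singleton'.1 (hJ hyJ)
      exact ⟨y', ht _ (by rwa [mul_comm]), by ring⟩
  refine (Submodule.eq_bot_iff J).2 fun x hx => hpow x fun n => ?_
  obtain ⟨y, -, rfl⟩ := hdvd n x hx
  exact dvd_mul_right _ _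

open Polynomial in
lemma exists_ker_eq_span_singleton_of_algEquiv_polynomial {S B : Type*} [CommRing S]
    [Nontrivial S] [CommRing B] [Algebra S B] (e : B ≃ₐ[S] S[X]) (θ : B →ₐ[S] S) :
    ∃ t : B, RingHom.ker θ = Ideal.span {t} ∧ t ≠ 0 ∧ ∀ z, (∀ n, t ^ n ∣ z) → z = 0 := by
  set a := θ (e.symm X)
  refine ⟨e.symm (X - C a), ?_, (map_ne_zero_iff _ e.symm.injective).2 (X_sub_C_ne_zero a),
    fun z hz => ?_⟩
  · ext w
    rw [RingHom.mem_ker, Ideal.mem_span_singleton, ← map_dvd_iff e, e.apply_symm_apply]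
    simpa using (X_sub_C_dvd_iff_algHom_eq_zero (θ.comp e.symm.toAlgHom) (f := e w)).symm
  · rw [← map_eq_zero_iff e e.injective]
    exact eq_zero_of_forall_X_sub_C_pow_dvd (a := a) fun n => by simpa using map_dvd e (hz n)

lemma Ideal.mem_map_includeRight_of_mul_mem {R S A : Type*} [CommRing R] [CommRing S]
    [Algebra R S] [Module.Flat R S] [CommRing A] [Algebra R A] {I : Ideal A} {s : A}
    (hs : ∀ a, s * a ∈ I → a ∈ I) {z : S ⊗[R] A}
    (hz : Algebra.TensorProduct.includeRight s * z ∈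
      I.map (Algebra.TensorProduct.includeRight : A →ₐ[R] S ⊗[R] A)) :
    z ∈ I.map (Algebra.TensorProduct.includeRight : A →ₐ[R] S ⊗[R] A) := by
  let q := Algebra.TensorProduct.map (AlgHom.id R S) (Ideal.Quotient.mkₐ R I)
  have hker : RingHom.ker q = I.map (Algebra.TensorProduct.includeRight : A →ₐ[R] S ⊗[R] A) := by
    rw [Algebra.TensorProduct.lTensor_ker _ (Ideal.Quotient.mkₐ_surjective R I)]
    congr 1
    exact Ideal.Quotient.mkₐ_ker R I
  have hreg : Function.Injective (LinearMap.mulLeft R (Ideal.Quotient.mk I s)) := by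
    refine (injective_iff_map_eq_zero _).2 fun x hx => ?_
    obtain ⟨a, rfl⟩ := Ideal.Quotient.mk_surjective x
    rw [LinearMap.mulLeft_apply, ← map_mul, Ideal.Quotient.eq_zero_iff_mem] at hx
    exact Ideal.Quotient.eq_zero_iff_mem.2 (hs a hx)
  have hmul : ∀ w, (LinearMap.mulLeft R (Ideal.Quotient.mk I s)).lTensor S w =
      q (Algebra.TensorProduct.includeRight s) * w := by
    intro w
    induction w using TensorProduct.induction_on with
    | zero => simp
    | tmul r d => simp [q]
    | add u v hu hv => rw [map_add, mul_add, hu, hv]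
  rw [← hker, RingHom.mem_ker] at hz ⊢
  rw [map_mul, ← hmul] at hz
  exact Module.Flat.lTensor_preserves_injective_linearMap _ hreg (hz.trans (map_zero _).symm)

lemma Ideal.eq_bot_of_lt_of_map_includeRight_eq_span_singleton {R S A : Type*} [CommRing R]
    [CommRing S] [Algebra R S] [Module.FaithfullyFlat R S] [CommRing A] [Algebra R A]
    {P Q : Ideal A} [hQ : Q.IsPrime] (hQP : Q < P) {t : S ⊗[R] A}
    (ht : P.map (Algebra.TensorProduct.includeRight : A →ₐ[R] S ⊗[R] A) = Ideal.span {t})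
    (hpow : ∀ z, (∀ n, t ^ n ∣ z) → z = 0) : Q = ⊥ := by
  let ι : A →ₐ[R] S ⊗[R] A := Algebra.TensorProduct.includeRight
  obtain ⟨s, hsP, hsQ⟩ := SetLike.exists_of_lt hQP
  obtain ⟨u, hu⟩ := Ideal.mem_span_singleton'.1 (ht ▸ Ideal.mem_map_of_mem ι hsP)
  have hreg (z) (hz : t * z ∈ Q.map ι) : z ∈ Q.map ι := by
    refine Ideal.mem_map_includeRight_of_mul_mem
      (fun a ha => (hQ.mem_or_mem ha).resolve_left hsQ) ?_
    rw [← hu, mul_assoc]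
    exact Ideal.mul_mem_left _ u hz
  have hι : Function.Injective ι := Module.FaithfullyFlat.tensorProduct_mk_injective A
  exact (Ideal.map_eq_bot_iff_of_injective hι).1
    (Ideal.eq_bot_of_le_span_singleton (ht ▸ Ideal.map_mono hQP.le) hreg hpow)

/-- Let `R` be a ring and `A` an `R`-algebra such that (1) `A` is an integral domain,
(2) there is a retraction `Φ : A → R`, and (3) there exists a faithfully flat ring
homomorphism `η : R → R'` (encoded as a faithfully flat `R`-algebra structure on `R'`)
such that `A ⊗_R R' ≅ R'[X]` as `R'`-algebras.  Then `P = ker Φ` is a prime ideal of `A`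
of height one (height taken in the poset of prime ideals, i.e. in `PrimeSpectrum A`). -/
theorem ker_retraction_isPrime_height_one
    (R A R' : Type*) [CommRing R] [CommRing A] [Algebra R A] [IsDomain A]
    (Φ : A →ₐ[R] R)
    [CommRing R'] [Algebra R R'] [Module.FaithfullyFlat R R']
    (e : (R' ⊗[R] A) ≃ₐ[R'] Polynomial R') :
    ∃ hP : (RingHom.ker (Φ : A →+* R)).IsPrime,
      Order.height (⟨RingHom.ker (Φ : A →+* R), hP⟩ : PrimeSpectrum A) = 1 := by
  have : IsDomain R := (Function.LeftInverse.injective Φ.commutes).isDomain (algebraMap R A)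
  have : Nontrivial R' := (Algebra.TensorProduct.rid R R' R').symm.toEquiv.nontrivial
  set P := RingHom.ker (Φ : A →+* R)
  let Φ' : R' ⊗[R] A →ₐ[R'] R' := (Algebra.TensorProduct.rid R R' R').toAlgHom.comp
    (Algebra.TensorProduct.map (AlgHom.id R' R') Φ)
  have hker : RingHom.ker Φ' = P.map Algebra.TensorProduct.includeRight := by
    ext x
    exact (EmbeddingLike.map_eq_zero_iff (f := Algebra.TensorProduct.rid R R' R')).trans
      (SetLike.ext_iff.1 (Algebra.TensorProduct.lTensor_ker (A := R') Φ
        fun r => ⟨algebraMap R A r, Φ.commutes r⟩) x)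
  obtain ⟨t, ht, ht0, hpow⟩ := exists_ker_eq_span_singleton_of_algEquiv_polynomial e Φ'
  rw [hker] at ht
  refine ⟨RingHom.ker_isPrime _, Order.height_eq_one_of_forall_lt_eq_bot ?_ fun Q hQ => ?_⟩
  · refine bot_lt_iff_ne_bot.2 fun hP => ht0 ?_
    rw [← Ideal.span_singleton_eq_bot, ← ht, show P = ⊥ from congrArg PrimeSpectrum.asIdeal hP,
      Ideal.map_bot]
  · exact PrimeSpectrum.ext (Ideal.eq_bot_of_lt_of_map_includeRight_eq_span_singleton hQ ht hpow)
end

section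
/- Let $k$ be a field of characteristic $p \geq 2$, let $a \in k$ with $a \notin k^p$, and let $A = k[X,Y]/(Y^p - X - aX^p)$. Then: (i) there exists a $k$-algebra homomorphism $A \to k$ (a retraction of $A$ to $k$); and (ii) if $k'$ is a field extension of $k$ containing an element $b$ with $b^p = a$, then $A \otimes_k k' \cong k'[T]$ as $k'$-algebras. -/
/-!
Base change commutes with taking the quotient, so over `k'` the algebra is
`k'[X,Y]/(Y^p - X - b^p X^p)`. In characteristic `p` this relation is `(Y - b X)^p - X`, so modulo
it `X` is the `p`-th power of `T := Y - b X` and `Y = T + b T^p`: the quotient is the polynomial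
ring in `T`. Over `k` itself the origin lies on the curve, which gives the retraction.
-/

open TensorProduct MvPolynomial

/-- The `k`-algebra `k[X,Y]/(Y^p - X - a·X^p)` (with `X = X 0`, `Y = X 1`). -/
abbrev ExampleAlg (k : Type*) [Field k] (p : ℕ) (a : k) :=
  MvPolynomial (Fin 2) k ⧸
    Ideal.span {(X 1 : MvPolynomial (Fin 2) k) ^ p - X 0 - C a * (X 0) ^ p}

section QuotientSpanSingleton

variable {σ R : Type*} [CommRing R] {S : Type*} [CommRing S] [Algebra R S]

noncomputable def MvPolynomial.liftQuotientSpanSingleton {f : MvPolynomial σ R} (x : σ → S)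
    (hx : aeval x f = 0) :
    MvPolynomial σ R ⧸ Ideal.span {f} →ₐ[R] S :=
  Ideal.Quotient.liftₐ _ (aeval x) fun g hg => by
    obtain ⟨c, rfl⟩ := Ideal.mem_span_singleton'.1 hg
    simp [hx]

@[simp]
theorem MvPolynomial.liftQuotientSpanSingleton_mk {f : MvPolynomial σ R} (x : σ → S)
    (hx : aeval x f = 0) (g : MvPolynomial σ R) :
    liftQuotientSpanSingleton x hx (Ideal.Quotient.mk _ g) = aeval x g :=
  rfl

noncomputable def MvPolynomial.algebraTensorQuotientSpanSingletonEquiv (A : Type*) [CommRing A]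
    [Algebra R A] (f : MvPolynomial σ R) :
    A ⊗[R] (MvPolynomial σ R ⧸ Ideal.span {f}) ≃ₐ[A]
      MvPolynomial σ A ⧸ Ideal.span {map (algebraMap R A) f} :=
  (Algebra.TensorProduct.tensorQuotientEquiv A _ A _).trans <|
    Ideal.quotientEquivAlg _ _ (algebraTensorAlgEquiv R A) <| by
      simp [Ideal.map_span]

end QuotientSpanSingleton

section ExampleRel

variable (R : Type*) [CommRing R] (p : ℕ)

noncomputable abbrev exampleRel (a : R) : MvPolynomial (Fin 2) R :=
  X 1 ^ p - X 0 - C a * X 0 ^ p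

theorem map_exampleRel {S : Type*} [CommRing S] (φ : R →+* S) (a : R) :
    map φ (exampleRel R p a) = exampleRel S p (φ a) := by
  simp

variable {R p}

theorem aeval_zero_exampleRel (hp : p ≠ 0) (a : R) :
    aeval (0 : Fin 2 → R) (exampleRel R p a) = 0 := by
  simp [zero_pow hp]

variable [Fact p.Prime] [CharP R p]

theorem sub_C_mul_X_pow_eq_exampleRel_add (b : R) :
    (X 1 - C b * X 0 : MvPolynomial (Fin 2) R) ^ p = exampleRel R p (b ^ p) + X 0 := by
  rw [sub_pow_char, mul_pow, ← C_pow]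
  ring

theorem aeval_exampleRel_parametrization (b : R) :
    aeval ![Polynomial.X ^ p, Polynomial.X + Polynomial.C b * Polynomial.X ^ p]
      (exampleRel R p (b ^ p)) = 0 := by
  simp [add_pow_char, mul_pow, ← pow_mul]

noncomputable def exampleRelQuotientEquivPolynomial (b : R) :
    (MvPolynomial (Fin 2) R ⧸ Ideal.span {exampleRel R p (b ^ p)}) ≃ₐ[R] Polynomial R := by
  let mk := Ideal.Quotient.mkₐ R (Ideal.span {exampleRel R p (b ^ p)})
  have mk_rel : mk (exampleRel R p (b ^ p)) = 0 :=
    Ideal.Quotient.eq_zero_iff_mem.2 (Ideal.subset_span rfl)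
  let t := mk (X 1 - C b * X 0)
  have t_pow : t ^ p = mk (X 0) := by
    rw [← map_pow, sub_C_mul_X_pow_eq_exampleRel_add, map_add, mk_rel, zero_add]
  refine AlgEquiv.ofAlgHom (liftQuotientSpanSingleton _ (aeval_exampleRel_parametrization b))
    (Polynomial.aeval t) ?_ ?_
  · ext
    simp [t, mk]
  · apply Ideal.Quotient.algHom_ext
    ext i
    simp only [AlgHom.comp_apply, Ideal.Quotient.mkₐ_eq_mk, liftQuotientSpanSingleton_mk, aeval_X,
      AlgHom.id_apply]
    fin_cases i
    · show Polynomial.aeval t (Polynomial.X ^ p : Polynomial R) = mk (X 0)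
      rw [map_pow, Polynomial.aeval_X, t_pow]
    · show Polynomial.aeval t (Polynomial.X + Polynomial.C b * Polynomial.X ^ p : Polynomial R) =
        mk (X 1)
      rw [map_add, map_mul, map_pow, Polynomial.aeval_X, Polynomial.aeval_C, t_pow,
        ← mk.commutes, algebraMap_eq, ← map_mul, ← map_add, sub_add_cancel]

end ExampleRel

theorem exampleAlg_retraction_and_form_general (k : Type*) [Field k] (p : ℕ) [CharP k p]
    (hp : 2 ≤ p) (a : k) :
    Nonempty (ExampleAlg k p a →ₐ[k] k) ∧
      ∀ (k' : Type*) [Field k'] [Algebra k k'] (b : k'),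
        b ^ p = algebraMap k k' a →
        Nonempty ((k' ⊗[k] ExampleAlg k p a) ≃ₐ[k'] Polynomial k') := by
  have : Fact p.Prime := ⟨CharP.char_is_prime_of_two_le k p hp⟩
  refine ⟨⟨liftQuotientSpanSingleton 0 (aeval_zero_exampleRel (by omega) a)⟩, ?_⟩
  intro k' _ _ b hb
  have : CharP k' p := charP_of_injective_algebraMap (algebraMap k k').injective p
  have base_change := algebraTensorQuotientSpanSingletonEquiv k' (exampleRel k p a)
  rw [map_exampleRel, ← hb] at base_change
  exact ⟨base_change.trans (exampleRelQuotientEquivPolynomial b)⟩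

/-- **Example 2, positive parts.** Let `k` be a field of characteristic `p ≥ 2`, `a ∈ k`
with `a ∉ kᵖ`, and `A = k[X,Y]/(Y^p - X - a·X^p)`.  Then (i) there is a `k`-algebra
homomorphism `A → k` (a retraction of `A` to `k`), and (ii) for every field extension
`k'` of `k` containing an element `b` with `b^p = a`, one has `A ⊗[k] k' ≅ k'[T]` as
`k'`-algebras. -/
theorem exampleAlg_retraction_and_form (k : Type*) [Field k] (p : ℕ) [CharP k p]
    (hp : 2 ≤ p) (a : k) (ha : ∀ c : k, c ^ p ≠ a) :
    Nonempty (ExampleAlg k p a →ₐ[k] k) ∧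
      ∀ (k' : Type*) [Field k'] [Algebra k k'] (b : k'),
        b ^ p = algebraMap k k' a →
        Nonempty ((k' ⊗[k] ExampleAlg k p a) ≃ₐ[k'] Polynomial k') :=
  exampleAlg_retraction_and_form_general k p hp a
end

section
/- Let $k$ be a field of characteristic $p \geq 2$, let $a \in k$ with $a \notin k^p$, and let $A = k[X,Y]/(Y^p - X - aX^p)$. Then $A$ is not a unique factorization domain. -/
open MvPolynomial

/-!
Choose `c` with `c ^ p = a` in an algebraic closure `K` of `k`. Then `T ↦ (T ^ p, T + c T ^ p)`
parametrises the curve, giving a `k`-algebra map `ψ : A → K[T]`. Every polynomial in the image of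
`ψ` has its coefficients below `p` in `k`, and its `p`-th coefficient is congruent modulo `k` to `c`
times its linear coefficient; so no unit multiple of `T` lies in the image, as it would force
`c ∈ k`.

If `A` were factorial, a prime factor `q` of `x` would divide `y`, since
`y ^ p = x (1 + a x ^ (p - 1))`, so the maximal ideal `(x, y)` would be `(q)`. Then `ψ q` divides
`ψ y - c ψ x = T` and is divisible by `T`, i.e. `ψ q` is a unit multiple of `T`.
-/

open scoped Polynomial

namespace MvPolynomial

theorem ker_constantCoeff {σ R : Type*} [CommSemiring R] :
    RingHom.ker (constantCoeff : MvPolynomial σ R →+* R) = idealOfVars σ R := by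
  ext F
  change _ ↔ F ∈ Ideal.span (Set.range X)
  rw [RingHom.mem_ker, ← Set.image_univ, mem_ideal_span_X_image, constantCoeff_eq]
  constructor
  · intro h m hm
    have hm0 : m ≠ 0 := by rintro rfl; exact (mem_support_iff.mp hm) h
    obtain ⟨i, hi⟩ := Finsupp.ne_iff.mp hm0
    exact ⟨i, Set.mem_univ i, hi⟩
  · intro h
    by_contra h0
    obtain ⟨i, -, hi⟩ := h 0 (mem_support_iff.mpr h0)
    exact hi rfl

theorem isMaximal_idealOfVars (σ k : Type*) [Field k] : (idealOfVars σ k).IsMaximal :=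
  ker_constantCoeff (σ := σ) (R := k) ▸
    RingHom.ker_isMaximal_of_surjective _ fun r => ⟨C r, constantCoeff_C σ r⟩

end MvPolynomial

theorem Ideal.exists_span_singleton_eq_of_isMaximal_span_pair {R : Type*} [CommRing R]
    [IsDomain R] [UniqueFactorizationMonoid R] {x y : R} {n : ℕ} (hn : n ≠ 0) (hxy : x ∣ y ^ n)
    (hmax : (Ideal.span {x, y}).IsMaximal) : ∃ q, Ideal.span {x, y} = Ideal.span {q} := by
  by_cases hx : x = 0
  · obtain rfl : y = 0 := pow_eq_zero_iff hn |>.mp (zero_dvd_iff.mp (hx ▸ hxy))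
    exact ⟨0, by rw [hx, Set.pair_eq_singleton]⟩
  have hxu : ¬IsUnit x := fun hu =>
    hmax.ne_top (Ideal.eq_top_of_isUnit_mem _ (Ideal.subset_span (Set.mem_insert x _)) hu)
  obtain ⟨q, hq, hqx⟩ := WfDvdMonoid.exists_irreducible_factor hxu hx
  have hqy : q ∣ y := (UniqueFactorizationMonoid.irreducible_iff_prime.mp hq).dvd_of_dvd_pow
    (hqx.trans hxy)
  refine ⟨q, hmax.eq_of_le (Ideal.span_singleton_ne_top hq.not_isUnit) ?_⟩
  rw [Ideal.span_le, Set.insert_subset_iff, Set.singleton_subset_iff]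
  exact ⟨Ideal.mem_span_singleton.mpr hqx, Ideal.mem_span_singleton.mpr hqy⟩

namespace Polynomial

section

variable {R K : Type*} [CommSemiring R] [CommRing K] [Algebra R K]

def lowCoeffSubalgebra (S : Subalgebra R K) (c : K) {p : ℕ} (hp : 2 ≤ p) :
    Subalgebra R K[X] where
  carrier := {f | (∀ i < p, f.coeff i ∈ S) ∧ f.coeff p - c * f.coeff 1 ∈ S}
  add_mem' := by
    rintro f g ⟨hf, hfp⟩ ⟨hg, hgp⟩
    refine ⟨fun i hi => by simpa using add_mem (hf i hi) (hg i hi), ?_⟩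
    convert add_mem hfp hgp using 1
    simp only [coeff_add]
    ring
  mul_mem' := by
    rintro f g ⟨hf, hfp⟩ ⟨hg, hgp⟩
    refine ⟨fun i hi => ?_, ?_⟩
    · rw [coeff_mul]
      refine sum_mem fun ij hij => ?_
      have := Finset.HasAntidiagonal.mem_antidiagonal.mp hij
      exact mul_mem (hf _ (by omega)) (hg _ (by omega))
    · obtain ⟨m, rfl⟩ : ∃ m, p = m + 2 := ⟨p - 2, by omega⟩
      -- the two extreme terms of the `p`-th coefficient carry the twist, the others lie in `S`
      have key : (f * g).coeff (m + 2) - c * (f * g).coeff 1 =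
          ∑ i ∈ Finset.range (m + 1), f.coeff (i + 1) * g.coeff (m + 1 - i) +
            (f.coeff 0 * (g.coeff (m + 2) - c * g.coeff 1) +
              (f.coeff (m + 2) - c * f.coeff 1) * g.coeff 0) := by
        rw [coeff_mul, coeff_mul, Finset.Nat.sum_antidiagonal_eq_sum_range_succ_mk,
          Finset.Nat.sum_antidiagonal_eq_sum_range_succ_mk, Finset.sum_range_succ',
          Finset.sum_range_succ]
        simp only [Nat.reduceSubDiff, Finset.sum_range_succ, add_tsub_cancel_left, tsub_self,
          tsub_zero, Nat.succ_eq_add_one, Nat.reduceAdd, Finset.range_one, Finset.sum_singleton]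
        ring
      rw [key]
      refine add_mem (sum_mem fun i hi => ?_)
        (add_mem (mul_mem (hf 0 (by omega)) hgp) (mul_mem hfp (hg 0 (by omega))))
      have := Finset.mem_range.mp hi
      exact mul_mem (hf _ (by omega)) (hg _ (by omega))
  algebraMap_mem' r := by
    refine ⟨fun i _ => ?_, ?_⟩
    · rw [algebraMap_apply, coeff_C]
      split_ifs
      exacts [S.algebraMap_mem r, S.zero_mem]
    · simp [algebraMap_apply, coeff_C, show p ≠ 0 by omega]

variable {S : Subalgebra R K} {c : K} {p : ℕ} {hp : 2 ≤ p}

theorem X_pow_mem_lowCoeffSubalgebra : (X ^ p : K[X]) ∈ lowCoeffSubalgebra S c hp :=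
  ⟨fun i hi => by simp [coeff_X_pow, hi.ne], by simp [coeff_X_pow, show 1 ≠ p by omega]⟩

theorem X_add_C_mul_X_pow_mem_lowCoeffSubalgebra :
    (X + C c * X ^ p : K[X]) ∈ lowCoeffSubalgebra S c hp := by
  refine ⟨fun i hi => ?_, by simp [coeff_X, coeff_X_pow, show 1 ≠ p by omega]⟩
  rw [coeff_add, coeff_C_mul_X_pow, if_neg hi.ne, add_zero, coeff_X]
  split_ifs
  exacts [S.one_mem, S.zero_mem]

end

theorem mem_of_mem_lowCoeffSubalgebra_of_associated_X {F K : Type*} [Field F] [Field K]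
    [Algebra F K] {S : IntermediateField F K} {c : K} {p : ℕ} {hp : 2 ≤ p} {f : K[X]}
    (hf : f ∈ lowCoeffSubalgebra S.toSubalgebra c hp) (hfX : Associated f X) : c ∈ S := by
  obtain ⟨u, rfl⟩ := hfX.symm
  obtain ⟨r, hr, hru⟩ := isUnit_iff.mp u.isUnit
  obtain ⟨hlow, htwist⟩ := hf
  have hr1 : (X * (u : K[X])).coeff 1 = r := by simp [← hru]
  have hrp : (X * (u : K[X])).coeff p = 0 := by
    obtain ⟨m, rfl⟩ : ∃ m, p = m + 2 := ⟨p - 2, by omega⟩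
    simp [← hru]
  have hrS : r ∈ S := hr1 ▸ hlow 1 (by omega)
  have hcrS : c * r ∈ S := by simpa [hr1, hrp] using neg_mem htwist
  simpa [hr.ne_zero] using mul_mem hcrS (inv_mem hrS)

end Polynomial

namespace ExampleAlg

variable {k : Type*} [Field k] {p : ℕ} {a : k}

noncomputable def x : ExampleAlg k p a := Ideal.Quotient.mk _ (X 0)

noncomputable def y : ExampleAlg k p a := Ideal.Quotient.mk _ (X 1)

theorem y_pow : (y : ExampleAlg k p a) ^ p = x + algebraMap k _ a * x ^ p := by
  rw [← sub_eq_zero]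
  simp only [x, y, ← Ideal.Quotient.mk_algebraMap, algebraMap_eq, ← map_pow, ← map_mul,
    ← map_add, ← map_sub, Ideal.Quotient.eq_zero_iff_mem]
  convert Ideal.mem_span_singleton_self _ using 1
  ring

theorem x_dvd_y_pow (hp : p ≠ 0) : (x : ExampleAlg k p a) ∣ y ^ p :=
  y_pow (a := a) ▸ dvd_add dvd_rfl ((dvd_pow_self _ hp).mul_left _)

theorem isMaximal_span_x_y (hp : p ≠ 0) :
    (Ideal.span {x, y} : Ideal (ExampleAlg k p a)).IsMaximal := by
  have hker : RingHom.ker (Ideal.Quotient.mk (Ideal.span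
      {(X 1 : MvPolynomial (Fin 2) k) ^ p - X 0 - C a * X 0 ^ p})) ≤ idealOfVars (Fin 2) k := by
    rw [Ideal.mk_ker, Ideal.span_singleton_le_iff_mem, ← ker_constantCoeff, RingHom.mem_ker]
    simp [zero_pow hp]
  have hspan : (Ideal.span {x, y} : Ideal (ExampleAlg k p a)) =
      (idealOfVars (Fin 2) k).map (Ideal.Quotient.mk _) := by
    change _ = Ideal.map _ (Ideal.span (Set.range X))
    rw [Ideal.map_span, ← Set.range_comp]
    congr 1
    ext z
    simp [Fin.exists_fin_two, x, y, eq_comm]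
  exact hspan ▸ (isMaximal_idealOfVars (Fin 2) k).map_of_surjective_of_ker_le
    Ideal.Quotient.mk_surjective hker

variable {K : Type*} [CommRing K] [Algebra k K] [ExpChar K p]

noncomputable def toPolynomial (c : K) (hc : c ^ p = algebraMap k K a) :
    ExampleAlg k p a →ₐ[k] K[X] :=
  Ideal.Quotient.liftₐ _
    (aeval ![Polynomial.X ^ p, Polynomial.X + Polynomial.C c * Polynomial.X ^ p]) fun F hF => by
      obtain ⟨G, rfl⟩ := Ideal.mem_span_singleton'.mp hF
      simp [add_pow_expChar, mul_pow, ← Polynomial.C_pow, hc, ← pow_mul]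

variable {c : K} {hc : c ^ p = algebraMap k K a}

theorem toPolynomial_mk (F : MvPolynomial (Fin 2) k) :
    toPolynomial c hc (Ideal.Quotient.mk _ F) =
      aeval ![Polynomial.X ^ p, Polynomial.X + Polynomial.C c * Polynomial.X ^ p] F :=
  rfl

@[simp]
theorem toPolynomial_x : toPolynomial c hc x = Polynomial.X ^ p := by
  simp [x, toPolynomial_mk]

@[simp]
theorem toPolynomial_y :
    toPolynomial c hc y = Polynomial.X + Polynomial.C c * Polynomial.X ^ p := by
  simp [y, toPolynomial_mk]

theorem toPolynomial_mem_lowCoeffSubalgebra (S : Subalgebra k K) (hp : 2 ≤ p)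
    (z : ExampleAlg k p a) : toPolynomial c hc z ∈ Polynomial.lowCoeffSubalgebra S c hp := by
  obtain ⟨F, rfl⟩ := Ideal.Quotient.mk_surjective z
  rw [toPolynomial_mk]
  refine Algebra.adjoin_le (Set.range_subset_iff.mpr fun i => ?_)
    (by rw [← aeval_range]; exact AlgHom.mem_range_self _ F)
  fin_cases i
  exacts [Polynomial.X_pow_mem_lowCoeffSubalgebra,
    Polynomial.X_add_C_mul_X_pow_mem_lowCoeffSubalgebra]

theorem associated_toPolynomial_X [IsDomain K] (hp : p ≠ 0) {q : ExampleAlg k p a}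
    (hq : Ideal.span {x, y} = Ideal.span {q}) : Associated (toPolynomial c hc q) Polynomial.X := by
  have hqx : q ∣ x := Ideal.mem_span_singleton.mp (hq ▸ Ideal.subset_span (by simp))
  have hqy : q ∣ y := Ideal.mem_span_singleton.mp (hq ▸ Ideal.subset_span (by simp))
  obtain ⟨f, g, hfg⟩ := Ideal.mem_span_pair.mp (hq ▸ Ideal.mem_span_singleton_self q)
  have hX : Polynomial.X = toPolynomial c hc y - Polynomial.C c * toPolynomial c hc x := by
    simp
  refine associated_of_dvd_dvd (hX ▸ dvd_sub (map_dvd _ hqy) ((map_dvd _ hqx).mul_left _)) ?_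
  rw [← hfg, map_add, map_mul, map_mul, toPolynomial_x, toPolynomial_y]
  have hXp : Polynomial.X ∣ (Polynomial.X ^ p : K[X]) := dvd_pow_self _ hp
  exact dvd_add (hXp.mul_left _) ((dvd_add dvd_rfl (hXp.mul_left _)).mul_left _)

end ExampleAlg

/-- **Example 2, negative part.** Let `k` be a field of characteristic `p ≥ 2`, `a ∈ k`
with `a ∉ kᵖ`, and `A = k[X,Y]/(Y^p - X - a·X^p)`.  Then `A` is not a unique
factorization domain: it is not the case that `A` is an integral domain in which
factorization into irreducibles exists and is unique. -/
theorem exampleAlg_not_UFD (k : Type*) [Field k] (p : ℕ) [CharP k p]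
    (hp : 2 ≤ p) (a : k) (ha : ∀ c : k, c ^ p ≠ a) :
    ¬ ∃ _ : IsDomain (ExampleAlg k p a), UniqueFactorizationMonoid (ExampleAlg k p a) := by
  rintro ⟨_, _⟩
  have hp0 : p ≠ 0 := by omega
  have := Fact.mk (CharP.char_is_prime_of_two_le k p hp)
  obtain ⟨q, hq⟩ := Ideal.exists_span_singleton_eq_of_isMaximal_span_pair hp0
    (ExampleAlg.x_dvd_y_pow hp0) (ExampleAlg.isMaximal_span_x_y (a := a) hp0)
  obtain ⟨c, hc⟩ := IsAlgClosed.exists_pow_nat_eq (algebraMap k (AlgebraicClosure k) a)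
    (by omega : 0 < p)
  have hck : c ∈ (⊥ : IntermediateField k (AlgebraicClosure k)) :=
    Polynomial.mem_of_mem_lowCoeffSubalgebra_of_associated_X
      (ExampleAlg.toPolynomial_mem_lowCoeffSubalgebra _ hp q)
      (ExampleAlg.associated_toPolynomial_X (hc := hc) hp0 hq)
  obtain ⟨b, rfl⟩ := IntermediateField.mem_bot.mp hck
  exact ha b ((algebraMap k (AlgebraicClosure k)).injective (by rw [map_pow, hc]))
end

section
/- Let $k$ be a field of characteristic $p \geq 2$, let $a \in k$ with $a \notin k^p$, and let $A = k[X,Y]/(Y^p - X - aX^p)$. Then $A$ is not isomorphic to the polynomial ring $k[T]$ as a $k$-algebra. -/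
open MvPolynomial

/-!
If `e : A ≃ₐ[k] k[T]`, the images `f, g` of `X, Y` satisfy `g ^ p = f + a f ^ p`. Since `a` is not
a `p`-th power, the top coefficients of `g ^ p` and `a f ^ p` cannot cancel, so
`g ^ p - a f ^ p` has degree `p · max (deg f) (deg g)`; as it equals `f` and `p ≥ 2`, both `f`
and `g` are constants. But `f` and `g` generate `k[T]`, which is not generated by constants.
-/

theorem eq_zero_of_pow_sub_mul_pow_eq_zero {k : Type*} [Field k] {p : ℕ} (hp : p ≠ 0) {a : k}
    (ha : ∀ c : k, c ^ p ≠ a) {x y : k} (h : y ^ p - a * x ^ p = 0) : x = 0 ∧ y = 0 := by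
  have hx : x = 0 := by
    by_contra hx
    apply ha (y / x)
    rw [div_pow, div_eq_iff (pow_ne_zero p hx)]
    linear_combination h
  subst hx
  simpa [zero_pow hp, hp] using h

namespace Polynomial

theorem mul_max_natDegree_le_natDegree_pow_sub_C_mul_pow {k : Type*} [Field k] {p : ℕ}
    (hp : p ≠ 0) {a : k} (ha : ∀ c : k, c ^ p ≠ a) {f g : k[X]} (hf : f ≠ 0) :
    p * max f.natDegree g.natDegree ≤ (g ^ p - C a * f ^ p).natDegree := by
  set n := max f.natDegree g.natDegree
  have hcoeff : (g ^ p - C a * f ^ p).coeff (p * n) = g.coeff n ^ p - a * f.coeff n ^ p := by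
    rw [coeff_sub, coeff_C_mul, coeff_pow_of_natDegree_le (le_max_right _ _),
      coeff_pow_of_natDegree_le (le_max_left _ _)]
  have htop : f.coeff n ≠ 0 ∨ g.coeff n ≠ 0 := by
    rcases le_or_gt g.natDegree f.natDegree with hle | hlt
    · left
      rw [show n = f.natDegree from max_eq_left hle]
      exact leadingCoeff_ne_zero.2 hf
    · right
      rw [show n = g.natDegree from max_eq_right hlt.le]
      exact leadingCoeff_ne_zero.2 (ne_zero_of_natDegree_gt hlt)
  refine le_natDegree_of_ne_zero fun h => ?_
  obtain ⟨hfn, hgn⟩ := eq_zero_of_pow_sub_mul_pow_eq_zero hp ha (hcoeff ▸ h)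
  exact htop.elim (· hfn) (· hgn)

theorem natDegree_eq_zero_of_pow_eq_add_C_mul_pow {k : Type*} [Field k] {p : ℕ} (hp : 2 ≤ p)
    {a : k} (ha : ∀ c : k, c ^ p ≠ a) {f g : k[X]} (h : g ^ p = f + C a * f ^ p) :
    f.natDegree = 0 ∧ g.natDegree = 0 := by
  have hp0 : p ≠ 0 := by omega
  by_cases hf : f = 0
  · subst hf
    simp only [zero_pow hp0, mul_zero, add_zero, pow_eq_zero_iff hp0] at h
    simp [h]
  have hdeg : p * max f.natDegree g.natDegree ≤ max f.natDegree g.natDegree := by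
    calc p * max f.natDegree g.natDegree ≤ (g ^ p - C a * f ^ p).natDegree :=
          mul_max_natDegree_le_natDegree_pow_sub_C_mul_pow hp0 ha hf
      _ = f.natDegree := by rw [h, add_sub_cancel_right]
      _ ≤ max f.natDegree g.natDegree := le_max_left _ _
  have := Nat.mul_le_mul_right (max f.natDegree g.natDegree) hp
  omega

theorem exists_natDegree_ne_zero_of_surjective {R σ : Type*} [CommSemiring R] [Nontrivial R]
    {φ : MvPolynomial σ R →ₐ[R] R[X]} (hφ : Function.Surjective φ) :
    ∃ i, (φ (MvPolynomial.X i)).natDegree ≠ 0 := by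
  by_contra! hconst
  have hrange : φ.range ≤ ⊥ := by
    rw [aeval_unique φ, aeval_range]
    refine Algebra.adjoin_le ?_
    rintro _ ⟨i, rfl⟩
    obtain ⟨c, hc⟩ := natDegree_eq_zero.1 (hconst i)
    exact Algebra.mem_bot.2 ⟨c, hc⟩
  obtain ⟨c, hc⟩ := Algebra.mem_bot.1 (hrange (φ.mem_range.2 (hφ Polynomial.X)))
  simpa using congrArg natDegree hc

end Polynomial

theorem ExampleAlg.mk_X_one_pow (k : Type*) [Field k] (p : ℕ) (a : k) :
    (Ideal.Quotient.mk _ (X 1) : ExampleAlg k p a) ^ p =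
      Ideal.Quotient.mk _ (X 0) + algebraMap k _ a * Ideal.Quotient.mk _ (X 0) ^ p := by
  have hrel : (Ideal.Quotient.mk _ (X 1 ^ p - X 0 - C a * X 0 ^ p) : ExampleAlg k p a) = 0 :=
    Ideal.Quotient.eq_zero_iff_mem.2 (Ideal.subset_span rfl)
  have hC : (Ideal.Quotient.mk _ (C a) : ExampleAlg k p a) = algebraMap k _ a := rfl
  rw [map_sub, map_sub, map_mul, map_pow, map_pow, hC] at hrel
  linear_combination hrel

theorem exampleAlg_not_polynomial_ring_general (k : Type*) [Field k] (p : ℕ)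
    (hp : 2 ≤ p) (a : k) (ha : ∀ c : k, c ^ p ≠ a) :
    IsEmpty (ExampleAlg k p a ≃ₐ[k] Polynomial k) := by
  refine ⟨fun e => ?_⟩
  set φ := e.toAlgHom.comp (Ideal.Quotient.mkₐ k _)
  have hrel : φ (X 1) ^ p = φ (X 0) + Polynomial.C a * φ (X 0) ^ p := by
    simpa [φ, ← Polynomial.algebraMap_eq] using congrArg e (ExampleAlg.mk_X_one_pow k p a)
  obtain ⟨hf, hg⟩ := Polynomial.natDegree_eq_zero_of_pow_eq_add_C_mul_pow hp ha hrel
  obtain ⟨i, hi⟩ := Polynomial.exists_natDegree_ne_zero_of_surjective (φ := φ)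
    (e.surjective.comp (Ideal.Quotient.mkₐ_surjective k _))
  fin_cases i
  exacts [hi hf, hi hg]

/-- **Example 2, nontriviality.** Let `k` be a field of characteristic `p ≥ 2`, `a ∈ k`
with `a ∉ kᵖ`, and `A = k[X,Y]/(Y^p - X - a·X^p)`.  Then `A` is not isomorphic to the
polynomial ring `k[T]` as a `k`-algebra. -/
theorem exampleAlg_not_polynomial_ring (k : Type*) [Field k] (p : ℕ) [CharP k p]
    (hp : 2 ≤ p) (a : k) (ha : ∀ c : k, c ^ p ≠ a) :
    IsEmpty (ExampleAlg k p a ≃ₐ[k] Polynomial k) :=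
  exampleAlg_not_polynomial_ring_general k p hp a ha
end
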